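/- Let f be a homeomorphism of M. If for every non-atomic Borel probability measure μ on M there exists δ_μ > 0 with μ(Γ_{δ_μ}(x)) = 0 for all x, then there exists a single δ > 0 with μ(Γ_δ(x)) = 0 for all x and all non-atomic μ simultaneously; equivalently, f is measure-expansive if and only if every non-atomic Borel probability measure on M is expansive for f. -/
import Mathlib


open Metric MeasureTheory Set

variable {M : Type*}

/-- The dynamical ball of an iterated homeomorphism. -/
def Gamma [MetricSpace M] (f : M ≃ₜ M) (δ : ℝ) (x : M) : Set M :=
  {y | ∀ n : ℤ, dist ((f.toEquiv ^ n) x) ((f.toEquiv ^ n) y) ≤ δ}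

lemma Gamma_mono [MetricSpace M] (f : M ≃ₜ M) {δ δ' : ℝ} (h : δ ≤ δ') (x : M) :
    Gamma f δ x ⊆ Gamma f δ' x := fun _ hy n => (hy n).trans h

theorem stmt14 [MetricSpace M] [CompactSpace M] [MeasurableSpace M] [BorelSpace M]
    (f : M ≃ₜ M) :
    (∀ μ : Measure M, IsProbabilityMeasure μ → (∀ x : M, μ {x} = 0) →
      ∃ δ > (0:ℝ), ∀ x : M, μ (Gamma f δ x) = 0) ↔
    (∃ δ > (0:ℝ), ∀ μ : Measure M, IsProbabilityMeasure μ →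
      (∀ x : M, μ {x} = 0) → ∀ x : M, μ (Gamma f δ x) = 0) := by
  constructor
  · intro h
    by_contra hc
    push_neg at hc
    have hc' : ∀ n : ℕ, ∃ μ : Measure M, IsProbabilityMeasure μ ∧ (∀ x : M, μ {x} = 0) ∧
        ∃ x : M, μ (Gamma f (1 / (n + 1)) x) ≠ 0 := by
      intro n
      obtain ⟨μ, h1, h2, x, hx⟩ := hc (1 / (n + 1)) (by positivity)
      exact ⟨μ, h1, h2, x, hx⟩
    choose μs hP hN xs hx using hc'
    set c : ℕ → ENNReal := fun n => (2 : ENNReal)⁻¹ ^ (n + 1) with hcdef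
    have hcne : ∀ n, c n ≠ 0 := fun n => by
      simp [hcdef, pow_ne_zero]
    have hcnetop : ∀ n, c n ≠ ⊤ := fun n => by
      simp [hcdef]
    set ν : Measure M := Measure.sum (fun n => c n • μs n) with hν
    have hνapp : ∀ s : Set M, MeasurableSet s → ν s = ∑' n, c n * μs n s := by
      intro s hs
      rw [hν, Measure.sum_apply _ hs]
      simp [Measure.smul_apply]
    have hνprob : IsProbabilityMeasure ν := by
      constructor
      rw [hνapp univ MeasurableSet.univ]
      have : ∀ n, c n * μs n univ = c n := fun n => by
        have := (hP n).measure_univ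
        simp [this]
      simp only [this]
      have : ∑' n : ℕ, c n = (2 : ENNReal)⁻¹ * ∑' n : ℕ, (2 : ENNReal)⁻¹ ^ n := by
        rw [← ENNReal.tsum_mul_left]
        congr 1; ext n; rw [hcdef]; ring
      rw [this, ENNReal.tsum_geometric, ENNReal.one_sub_inv_two, inv_inv]
      simp [ENNReal.inv_mul_cancel]
    have hνna : ∀ x : M, ν {x} = 0 := by
      intro x
      rw [hνapp {x} (measurableSet_singleton x)]
      simp [hN _ x]
    obtain ⟨δ, hδpos, hδ⟩ := h ν hνprob hνna
    obtain ⟨n, hn⟩ := exists_nat_one_div_lt hδpos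
    have hle : c n • μs n ≤ ν := by
      rw [hν]; exact Measure.le_sum _ n
    have h0 : c n * μs n (Gamma f δ (xs n)) = 0 := by
      have := hle (Gamma f δ (xs n))
      rw [hδ (xs n)] at this
      simpa using le_antisymm this bot_le
    have h0' : μs n (Gamma f δ (xs n)) = 0 := by
      rcases mul_eq_zero.mp h0 with h | h
      · exact absurd h (hcne n)
      · exact h
    have : μs n (Gamma f (1 / (n + 1)) (xs n)) = 0 := by
      refine le_antisymm ?_ bot_le
      rw [← h0']
      exact measure_mono (Gamma_mono f hn.le (xs n))
    exact hx n this
  · rintro ⟨δ, hδ, h⟩ μ h1 h2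
    exact ⟨δ, hδ, h μ h1 h2⟩
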